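/- Let m > 0 and g > 0, and let V : ℝ² \ {(0,0)} → ℝ be V(q₁,q₂) = −m/√(q₁²+q₂²) − g q₁² − g q₂²/4. Then V has exactly four critical points, namely (±(m/(2g))^(1/3), 0) and (0, ±(2m/g)^(1/3)); the critical value at the points on the q₁-axis is E₁ = −3·(m²g/4)^(1/3), the critical value at the points on the q₂-axis is E₂ = −(3/2)·(m²g/2)^(1/3), and these satisfy E₁ < E₂ < 0. -/

import Mathlib

open Set

noncomputable def Lmap (a b : ℝ) : (ℝ × ℝ) →L[ℝ] ℝ :=
  a • (ContinuousLinearMap.fst ℝ ℝ ℝ) + b • (ContinuousLinearMap.snd ℝ ℝ ℝ)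

lemma hasfd (m g : ℝ) (q : ℝ × ℝ) (hq : q ≠ 0) :
    HasFDerivAt (fun p : ℝ × ℝ => -m / Real.sqrt (p.1 ^ 2 + p.2 ^ 2) - g * p.1 ^ 2 - g * p.2 ^ 2 / 4)
      (Lmap (m * q.1 / Real.sqrt (q.1 ^ 2 + q.2 ^ 2) ^ 3 - 2 * g * q.1)
            (m * q.2 / Real.sqrt (q.1 ^ 2 + q.2 ^ 2) ^ 3 - g * q.2 / 2)) q := by
  have hq' : ¬(q.1 = 0 ∧ q.2 = 0) := by
    intro ⟨h1, h2⟩; exact hq (Prod.ext h1 h2)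
  have hs : 0 < q.1 ^ 2 + q.2 ^ 2 := by
    rcases not_and_or.mp hq' with h | h
    · have : 0 < q.1 ^ 2 := by positivity
      nlinarith [sq_nonneg q.2]
    · have : 0 < q.2 ^ 2 := by positivity
      nlinarith [sq_nonneg q.1]
  set s := q.1 ^ 2 + q.2 ^ 2 with hsdef
  have hr : 0 < Real.sqrt s := Real.sqrt_pos.mpr hs
  set r := Real.sqrt s with hrdef
  have hr2 : r ^ 2 = s := Real.sq_sqrt hs.le
  have h1 : HasFDerivAt (fun p : ℝ × ℝ => p.1 ^ 2)
      (((2 : ℕ) * q.1 ^ 1) • (ContinuousLinearMap.fst ℝ ℝ ℝ)) q :=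
    (hasDerivAt_pow 2 q.1).comp_hasFDerivAt q hasFDerivAt_fst
  have h2 : HasFDerivAt (fun p : ℝ × ℝ => p.2 ^ 2)
      (((2 : ℕ) * q.2 ^ 1) • (ContinuousLinearMap.snd ℝ ℝ ℝ)) q :=
    (hasDerivAt_pow 2 q.2).comp_hasFDerivAt q hasFDerivAt_snd
  have hS : HasFDerivAt (fun p : ℝ × ℝ => p.1 ^ 2 + p.2 ^ 2)
      (((2 : ℕ) * q.1 ^ 1) • (ContinuousLinearMap.fst ℝ ℝ ℝ)
        + ((2 : ℕ) * q.2 ^ 1) • (ContinuousLinearMap.snd ℝ ℝ ℝ)) q := h1.add h2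
  have hd : HasDerivAt (fun t : ℝ => -m * (Real.sqrt t)⁻¹)
      (-m * (-(1 / (2 * r)) / r ^ 2)) s :=
    ((Real.hasDerivAt_sqrt hs.ne').inv hr.ne').const_mul (-m)
  have hcomp := hd.comp_hasFDerivAt q hS
  have hmain : HasFDerivAt (fun p : ℝ × ℝ => -m / Real.sqrt (p.1 ^ 2 + p.2 ^ 2))
      ((-m * (-(1 / (2 * r)) / r ^ 2)) •
        (((2 : ℕ) * q.1 ^ 1) • (ContinuousLinearMap.fst ℝ ℝ ℝ)
          + ((2 : ℕ) * q.2 ^ 1) • (ContinuousLinearMap.snd ℝ ℝ ℝ))) q := by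
    refine hcomp.congr_of_eventuallyEq (Filter.Eventually.of_forall fun p => ?_)
    simp [Function.comp, div_eq_mul_inv]
  have hg1 : HasFDerivAt (fun p : ℝ × ℝ => g * p.1 ^ 2)
      (g • (((2 : ℕ) * q.1 ^ 1) • (ContinuousLinearMap.fst ℝ ℝ ℝ))) q := h1.const_mul g
  have heq : (fun p : ℝ × ℝ => g * p.2 ^ 2 / 4) = fun p : ℝ × ℝ => (g / 4) * p.2 ^ 2 := by
    funext p; ring
  have hg2 : HasFDerivAt (fun p : ℝ × ℝ => g * p.2 ^ 2 / 4)
      ((g / 4) • (((2 : ℕ) * q.2 ^ 1) • (ContinuousLinearMap.snd ℝ ℝ ℝ))) q := by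
    rw [heq]; exact h2.const_mul (g / 4)
  have := (hmain.sub hg1).sub hg2
  refine this.congr_fderiv ?_
  ext v <;> simp [Lmap] <;> field_simp <;> ring

lemma cuberoot {x y : ℝ} (hx : 0 ≤ x) (h : x ^ 3 = y) : x = y ^ ((1 : ℝ) / 3) := by
  subst h
  rw [← Real.rpow_natCast x 3, ← Real.rpow_mul hx]; norm_num

lemma cube_val {y : ℝ} (hy : 0 ≤ y) : (y ^ ((1 : ℝ) / 3)) ^ 3 = y := by
  rw [← Real.rpow_natCast (y ^ ((1:ℝ)/3)) 3, ← Real.rpow_mul hy]; norm_num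

lemma cube_eq {a b : ℝ} (ha : 0 ≤ a) (hb : 0 ≤ b) (h : a ^ 3 = b ^ 3) : a = b := by
  have h1 : a = (a ^ 3) ^ ((1 : ℝ) / 3) := cuberoot ha rfl
  have h2 : b = (b ^ 3) ^ ((1 : ℝ) / 3) := cuberoot hb rfl
  rw [h1, h2, h]

set_option maxHeartbeats 1000000 in
/-- The potential `V(q) = -m/|q| - g q₁² - g q₂²/4` of the frozen Hill's problem with
repulsive centrifugal correction (`m, g > 0`) has exactly the four critical points
`(±(m/(2g))^(1/3), 0)` and `(0, ±(2m/g)^(1/3))`, with critical values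
`E₁ = -3 (m²g/4)^(1/3)` on the `q₁`-axis, `E₂ = -(3/2)(m²g/2)^(1/3)` on the `q₂`-axis,
and `E₁ < E₂ < 0`. -/
theorem stmt_18 (m g : ℝ) (hm : 0 < m) (hg : 0 < g)
    (V : ℝ × ℝ → ℝ)
    (hV : ∀ q : ℝ × ℝ, q ≠ 0 →
      V q = -m / Real.sqrt (q.1 ^ 2 + q.2 ^ 2) - g * q.1 ^ 2 - g * q.2 ^ 2 / 4) :
    {q : ℝ × ℝ | q ≠ 0 ∧ fderiv ℝ V q = 0} =
      {((m / (2 * g)) ^ ((1 : ℝ) / 3), 0), (-(m / (2 * g)) ^ ((1 : ℝ) / 3), 0),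
       (0, (2 * m / g) ^ ((1 : ℝ) / 3)), (0, -(2 * m / g) ^ ((1 : ℝ) / 3))} ∧
    V ((m / (2 * g)) ^ ((1 : ℝ) / 3), 0) = -3 * (m ^ 2 * g / 4) ^ ((1 : ℝ) / 3) ∧
    V (-(m / (2 * g)) ^ ((1 : ℝ) / 3), 0) = -3 * (m ^ 2 * g / 4) ^ ((1 : ℝ) / 3) ∧
    V (0, (2 * m / g) ^ ((1 : ℝ) / 3)) = -(3 / 2) * (m ^ 2 * g / 2) ^ ((1 : ℝ) / 3) ∧
    V (0, -(2 * m / g) ^ ((1 : ℝ) / 3)) = -(3 / 2) * (m ^ 2 * g / 2) ^ ((1 : ℝ) / 3) ∧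
    -3 * (m ^ 2 * g / 4) ^ ((1 : ℝ) / 3) < -(3 / 2) * (m ^ 2 * g / 2) ^ ((1 : ℝ) / 3) ∧
    -(3 / 2) * (m ^ 2 * g / 2) ^ ((1 : ℝ) / 3) < 0 := by
  -- abbreviations
  set c : ℝ := (m / (2 * g)) ^ ((1 : ℝ) / 3) with hc_def
  set d : ℝ := (2 * m / g) ^ ((1 : ℝ) / 3) with hd_def
  set B : ℝ := (m ^ 2 * g / 4) ^ ((1 : ℝ) / 3) with hB_def
  set C : ℝ := (m ^ 2 * g / 2) ^ ((1 : ℝ) / 3) with hC_def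
  have hc_pos : 0 < c := Real.rpow_pos_of_pos (by positivity) _
  have hd_pos : 0 < d := Real.rpow_pos_of_pos (by positivity) _
  have hB_pos : 0 < B := Real.rpow_pos_of_pos (by positivity) _
  have hC_pos : 0 < C := Real.rpow_pos_of_pos (by positivity) _
  have hc3 : c ^ 3 = m / (2 * g) := cube_val (by positivity)
  have hd3 : d ^ 3 = 2 * m / g := cube_val (by positivity)
  have hB3 : B ^ 3 = m ^ 2 * g / 4 := cube_val (by positivity)
  have hC3 : C ^ 3 = m ^ 2 * g / 2 := cube_val (by positivity)
  -- fderiv formula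
  have hfd : ∀ q : ℝ × ℝ, q ≠ 0 → fderiv ℝ V q =
      Lmap (m * q.1 / Real.sqrt (q.1 ^ 2 + q.2 ^ 2) ^ 3 - 2 * g * q.1)
           (m * q.2 / Real.sqrt (q.1 ^ 2 + q.2 ^ 2) ^ 3 - g * q.2 / 2) := by
    intro q hq
    have hmem : {(0 : ℝ × ℝ)}ᶜ ∈ nhds q :=
      isOpen_compl_singleton.mem_nhds (by simpa using hq)
    have hev : V =ᶠ[nhds q]
        (fun p : ℝ × ℝ => -m / Real.sqrt (p.1 ^ 2 + p.2 ^ 2) - g * p.1 ^ 2 - g * p.2 ^ 2 / 4) :=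
      Filter.eventually_of_mem hmem (fun p hp => hV p (by simpa using hp))
    rw [hev.fderiv_eq, (hasfd m g q hq).fderiv]
  -- values of V on the axes
  have hVc : ∀ x : ℝ, x ≠ 0 → V (x, 0) = -m / |x| - g * x ^ 2 := by
    intro x hx
    rw [hV (x, 0) (by simp [Prod.ext_iff, hx])]
    simp [Real.sqrt_sq_eq_abs]
  have hVd : ∀ y : ℝ, y ≠ 0 → V (0, y) = -m / |y| - g * y ^ 2 / 4 := by
    intro y hy
    rw [hV (0, y) (by simp [Prod.ext_iff, hy])]
    simp [Real.sqrt_sq_eq_abs]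
  have hgc2 : g * c ^ 2 = B := by
    apply cube_eq (by positivity) hB_pos.le
    rw [show (g * c ^ 2) ^ 3 = g ^ 3 * (c ^ 3) ^ 2 by ring, hc3, hB3]
    field_simp; ring
  have hgd2 : g * d ^ 2 = 2 * C := by
    apply cube_eq (by positivity) (by positivity)
    rw [show (g * d ^ 2) ^ 3 = g ^ 3 * (d ^ 3) ^ 2 by ring, hd3,
      show (2 * C) ^ 3 = 8 * C ^ 3 by ring, hC3]
    field_simp; ring
  have hmc : m / c = 2 * g * c ^ 2 := by
    rw [div_eq_iff hc_pos.ne', show 2 * g * c ^ 2 * c = 2 * g * c ^ 3 by ring, hc3]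
    field_simp
  have hmd : m / d = g * d ^ 2 / 2 := by
    rw [div_eq_iff hd_pos.ne', show g * d ^ 2 / 2 * d = g / 2 * d ^ 3 by ring, hd3]
    field_simp
  have hVc_val : ∀ x : ℝ, |x| = c → V (x, 0) = -3 * B := by
    intro x hx
    have hx0 : x ≠ 0 := by
      intro h; rw [h] at hx; simp at hx; exact hc_pos.ne' hx.symm
    rw [hVc x hx0, hx]
    have : g * x ^ 2 = g * c ^ 2 := by
      rw [← sq_abs x, hx]
    rw [this, neg_div, hmc]; linear_combination (-3 : ℝ) * hgc2
  have hVd_val : ∀ y : ℝ, |y| = d → V (0, y) = -(3 / 2) * C := by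
    intro y hy
    have hy0 : y ≠ 0 := by
      intro h; rw [h] at hy; simp at hy; exact hd_pos.ne' hy.symm
    rw [hVd y hy0, hy]
    have : g * y ^ 2 = g * d ^ 2 := by
      rw [← sq_abs y, hy]
    rw [this, neg_div, hmd]; linear_combination (-3/4 : ℝ) * hgd2
  refine ⟨?_, hVc_val c (abs_of_pos hc_pos), hVc_val (-c) (by rw [abs_neg, abs_of_pos hc_pos]),
    hVd_val d (abs_of_pos hd_pos), hVd_val (-d) (by rw [abs_neg, abs_of_pos hd_pos]), ?_, ?_⟩
  · -- the set of critical points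
    ext q
    simp only [mem_setOf_eq, mem_insert_iff, mem_singleton_iff]
    constructor
    · rintro ⟨hq, h0⟩
      have hq' : ¬(q.1 = 0 ∧ q.2 = 0) := by
        intro ⟨h1, h2⟩; exact hq (Prod.ext h1 h2)
      have hs : 0 < q.1 ^ 2 + q.2 ^ 2 := by
        rcases not_and_or.mp hq' with h | h
        · have : 0 < q.1 ^ 2 := by positivity
          nlinarith [sq_nonneg q.2]
        · have : 0 < q.2 ^ 2 := by positivity
          nlinarith [sq_nonneg q.1]
      set r := Real.sqrt (q.1 ^ 2 + q.2 ^ 2) with hrdef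
      have hr : 0 < r := Real.sqrt_pos.mpr hs
      have hL : Lmap (m * q.1 / r ^ 3 - 2 * g * q.1) (m * q.2 / r ^ 3 - g * q.2 / 2) = 0 := by
        rw [← hfd q hq]; exact h0
      have ha : m * q.1 / r ^ 3 - 2 * g * q.1 = 0 := by
        have := DFunLike.congr_fun hL ((1 : ℝ), (0 : ℝ))
        simpa [Lmap] using this
      have hb : m * q.2 / r ^ 3 - g * q.2 / 2 = 0 := by
        have := DFunLike.congr_fun hL ((0 : ℝ), (1 : ℝ))
        simpa [Lmap] using this
      have ha' : q.1 = 0 ∨ m = 2 * g * r ^ 3 := by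
        have h1 : m * q.1 = 2 * g * q.1 * r ^ 3 := by
          field_simp at ha; linarith
        rcases mul_eq_zero.mp (show q.1 * (m - 2 * g * r ^ 3) = 0 by nlinarith) with h | h
        · exact Or.inl h
        · exact Or.inr (by linarith)
      have hb' : q.2 = 0 ∨ 2 * m = g * r ^ 3 := by
        have h1 : m * q.2 = g * q.2 / 2 * r ^ 3 := by
          field_simp at hb; linarith
        rcases mul_eq_zero.mp (show q.2 * (2 * m - g * r ^ 3) = 0 by nlinarith) with h | h
        · exact Or.inl h
        · exact Or.inr (by linarith)
      rcases ha' with h1 | h1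
      · -- q.1 = 0, so q.2 ≠ 0
        have h2 : q.2 ≠ 0 := fun h => hq' ⟨h1, h⟩
        rcases hb' with h | h
        · exact absurd h h2
        have hrq : r = |q.2| := by rw [hrdef, h1]; simp [Real.sqrt_sq_eq_abs]
        have habs : |q.2| ^ 3 = 2 * m / g := by
          rw [← hrq]; field_simp; linarith
        have : |q.2| = d := cuberoot (abs_nonneg _) habs
        rcases (abs_eq hd_pos.le).mp this with h | h
        · exact Or.inr (Or.inr (Or.inl (Prod.ext h1 h)))
        · exact Or.inr (Or.inr (Or.inr (Prod.ext h1 h)))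
      · rcases hb' with h2 | h2
        · -- q.2 = 0
          have hrq : r = |q.1| := by rw [hrdef, h2]; simp [Real.sqrt_sq_eq_abs]
          have habs : |q.1| ^ 3 = m / (2 * g) := by
            rw [← hrq]; field_simp; linarith
          have : |q.1| = c := cuberoot (abs_nonneg _) habs
          rcases (abs_eq hc_pos.le).mp this with h | h
          · exact Or.inl (Prod.ext h h2)
          · exact Or.inr (Or.inl (Prod.ext h h2))
        · -- contradiction: m = 2 g r³ and 2m = g r³
          exfalso
          have hr3 : 0 < r ^ 3 := by positivity
          nlinarith
    · -- each of the four points is critical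
      have key : ∀ p : ℝ × ℝ, p ≠ 0 →
          m * p.1 / Real.sqrt (p.1 ^ 2 + p.2 ^ 2) ^ 3 - 2 * g * p.1 = 0 →
          m * p.2 / Real.sqrt (p.1 ^ 2 + p.2 ^ 2) ^ 3 - g * p.2 / 2 = 0 →
          p ≠ 0 ∧ fderiv ℝ V p = 0 := by
        intro p hp h1 h2
        refine ⟨hp, ?_⟩
        rw [hfd p hp, h1, h2]
        ext v <;> simp [Lmap]
      rintro (h | h | h | h) <;> subst h
      · refine key _ (by simp [Prod.ext_iff, hc_pos.ne']) ?_ (by simp)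
        have : Real.sqrt (c ^ 2 + 0 ^ 2) = c := by
          simp [Real.sqrt_sq_eq_abs, abs_of_pos hc_pos]
        rw [this]
        rw [sub_eq_zero, div_eq_iff (by positivity), hc3]
        field_simp
      · refine key _ (by simp [Prod.ext_iff, hc_pos.ne']) ?_ (by simp)
        have : Real.sqrt ((-c) ^ 2 + 0 ^ 2) = c := by
          simp [Real.sqrt_sq_eq_abs, abs_of_pos hc_pos]
        rw [this]
        rw [sub_eq_zero, div_eq_iff (by positivity), hc3]
        field_simp
      · refine key _ (by simp [Prod.ext_iff, hd_pos.ne']) (by simp) ?_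
        have : Real.sqrt (0 ^ 2 + d ^ 2) = d := by
          simp [Real.sqrt_sq_eq_abs, abs_of_pos hd_pos]
        rw [this]
        rw [sub_eq_zero, div_eq_iff (by positivity), hd3]
        field_simp
      · refine key _ (by simp [Prod.ext_iff, hd_pos.ne']) (by simp) ?_
        have : Real.sqrt (0 ^ 2 + (-d) ^ 2) = d := by
          simp [Real.sqrt_sq_eq_abs, abs_of_pos hd_pos]
        rw [this]
        rw [sub_eq_zero, div_eq_iff (by positivity), hd3]
        field_simp
  · -- E₁ < E₂
    have h8 : C ^ 3 < (2 * B) ^ 3 := by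
      rw [hC3, show (2 * B) ^ 3 = 8 * B ^ 3 by ring, hB3]
      have : 0 < m ^ 2 * g := by positivity
      linarith
    have := lt_of_pow_lt_pow_left₀ 3 (by positivity) h8
    linarith
  · linarith
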